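/- arXiv:2408.07987 — 3 statements merged into one kernel-verified Lean document; each statement's English description precedes it below -/
import Mathlib

section
/- The inductance is injective on admissible twigs: if A and B are admissible twigs with d(Ā)·d(B) = d(B̄)·d(A) (i.e. e(A) = e(B)), then A = B as lists. -/
open Matrix BigOperators

/-- The intersection-type matrix of a twig `A = [a_1,...,a_r]`: the `r × r` symmetric
tridiagonal matrix with diagonal entries `a_1,...,a_r` and `-1` on the sub/super-diagonals. -/
def twigMatrix (A : List ℤ) : Matrix (Fin A.length) (Fin A.length) ℤ :=
  fun i j =>
    if i = j then A.get i
    else if (i : ℕ) + 1 = (j : ℕ) ∨ (j : ℕ) + 1 = (i : ℕ) then -1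
    else 0

/-- The determinant `d(A)` of a twig; in particular `d([]) = 1`. -/
def twigDet (A : List ℤ) : ℤ := (twigMatrix A).det

/-- A twig is admissible if it is nonempty and all its entries are `≥ 2`. -/
def Admissible (A : List ℤ) : Prop := A ≠ [] ∧ ∀ a ∈ A, 2 ≤ a

/-! The first-row expansion gives the continuant recursion
`d(a :: b :: A) = a·d(b :: A) − d(A)`, so for admissible twigs `1 ≤ d(Ā) < d(A)` and `d(A)`,
`d(Ā)` are coprime. Equal inductances therefore force `d(A) = d(B)` and `d(Ā) = d(B̄)`. The first
entry is then recovered as the unique `a` with `d(A) = a·d(Ā) − s`, `0 ≤ s < d(Ā)` (one step of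
the Hirzebruch–Jung continued fraction `d(A)/d(Ā) = a_1 − 1/(a_2 − ⋯)`), and `s` is the
determinant of `Ā` with its first entry removed, so induction on the length applies. -/

theorem Matrix.det_succ_succ_of_first_row_col_eq_zero {R : Type*} [CommRing R] {n : ℕ}
    (M : Matrix (Fin (n + 2)) (Fin (n + 2)) R)
    (hrow : ∀ j : Fin n, M 0 j.succ.succ = 0) (hcol : ∀ i : Fin n, M i.succ.succ 0 = 0) :
    M.det = M 0 0 * (M.submatrix Fin.succ Fin.succ).det
      - M 0 1 * M 1 0 * (M.submatrix (Fin.succ ∘ Fin.succ) (Fin.succ ∘ Fin.succ)).det := by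
  have hminor : (M.submatrix Fin.succ (Fin.succAbove 1)).det
      = M 1 0 * (M.submatrix (Fin.succ ∘ Fin.succ) (Fin.succ ∘ Fin.succ)).det := by
    rw [det_succ_column_zero, Fin.sum_univ_succ]
    simp [hcol, Fin.succAbove, Fin.lt_def, Function.comp_def]
  rw [det_succ_row_zero, Fin.sum_univ_succ, Fin.sum_univ_succ]
  simp [hrow, hminor]
  ring

theorem twigMatrix_submatrix_succ (a : ℤ) (A : List ℤ) :
    (twigMatrix (a :: A)).submatrix Fin.succ Fin.succ = twigMatrix A := by
  ext i j
  simp [twigMatrix, Fin.succ_inj]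

theorem twigDet_nil : twigDet [] = 1 := by
  simp [twigDet]

theorem twigDet_singleton (a : ℤ) : twigDet [a] = a := by
  simp [twigDet, twigMatrix]

theorem twigDet_cons_cons (a b : ℤ) (A : List ℤ) :
    twigDet (a :: b :: A) = a * twigDet (b :: A) - twigDet A := by
  rw [twigDet, det_succ_succ_of_first_row_col_eq_zero, ← submatrix_submatrix,
    twigMatrix_submatrix_succ, twigMatrix_submatrix_succ]
  · simp [twigMatrix, twigDet]
  · intro j; simp [twigMatrix, Fin.ext_iff]
  · intro i; simp [twigMatrix, Fin.ext_iff]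

theorem Admissible.of_cons_cons {a b : ℤ} {A : List ℤ} (h : Admissible (a :: b :: A)) :
    Admissible (b :: A) :=
  ⟨List.cons_ne_nil b A, fun x hx => h.2 x (List.mem_cons_of_mem a hx)⟩

theorem Admissible.one_le_twigDet_tail_lt :
    ∀ {A : List ℤ}, Admissible A → 1 ≤ twigDet A.tail ∧ twigDet A.tail < twigDet A
  | [], h => absurd rfl h.1
  | [a], h => by
    have ha : 2 ≤ a := h.2 a (List.mem_singleton_self a)
    simp only [List.tail_cons, twigDet_nil, twigDet_singleton]
    omega
  | a :: b :: A, h => by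
    have ha : 2 ≤ a := h.2 a List.mem_cons_self
    obtain ⟨h1, h2⟩ := h.of_cons_cons.one_le_twigDet_tail_lt
    simp only [List.tail_cons, twigDet_cons_cons] at h1 h2 ⊢
    constructor <;> nlinarith

theorem isCoprime_twigDet_twigDet_tail : ∀ A : List ℤ, IsCoprime (twigDet A) (twigDet A.tail)
  | [] => by simpa [twigDet_nil] using isCoprime_one_left
  | [a] => by simpa [twigDet_nil] using isCoprime_one_right
  | a :: b :: A => by
    have ih := isCoprime_twigDet_twigDet_tail (b :: A)
    rw [List.tail_cons, twigDet_cons_cons, sub_eq_neg_add]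
    exact ih.symm.neg_left.add_mul_right_left a

theorem Int.eq_of_mul_sub_eq_mul_sub {a b q s t : ℤ} (hs : 0 ≤ s) (hsq : s < q) (ht : 0 ≤ t)
    (htq : t < q) (h : a * q - s = b * q - t) : a = b := by
  rcases lt_trichotomy a b with hab | hab | hab
  · nlinarith
  · exact hab
  · nlinarith

theorem Admissible.eq_of_twigDet_eq : ∀ {A B : List ℤ}, Admissible A → Admissible B →
    twigDet A = twigDet B → twigDet A.tail = twigDet B.tail → A = B
  | [], _, hA, _, _, _ => absurd rfl hA.1
  | _, [], _, hB, _, _ => absurd rfl hB.1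
  | [a], [b], _, _, hd, _ => by simpa [twigDet_singleton] using hd
  | [a], b :: b' :: B, _, hB, _, ht => by
    have := hB.of_cons_cons.one_le_twigDet_tail_lt
    simp only [List.tail_cons, twigDet_nil] at ht this
    omega
  | a :: a' :: A, [b], hA, _, _, ht => by
    have := hA.of_cons_cons.one_le_twigDet_tail_lt
    simp only [List.tail_cons, twigDet_nil] at ht this
    omega
  | a :: a' :: A, b :: b' :: B, hA, hB, hd, ht => by
    simp only [List.tail_cons] at ht
    obtain ⟨hA₁, hA₂⟩ := hA.of_cons_cons.one_le_twigDet_tail_lt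
    obtain ⟨hB₁, hB₂⟩ := hB.of_cons_cons.one_le_twigDet_tail_lt
    simp only [List.tail_cons] at hA₁ hA₂ hB₁ hB₂
    rw [twigDet_cons_cons, twigDet_cons_cons, ← ht] at hd
    have hab : a = b := Int.eq_of_mul_sub_eq_mul_sub (by omega) hA₂ (by omega) (ht ▸ hB₂) hd
    subst hab
    have htail : a' :: A = b' :: B :=
      hA.of_cons_cons.eq_of_twigDet_eq hB.of_cons_cons ht (by simpa using hd)
    rw [htail]

/-- the inductance `e(A) = d(Ā)/d(A)` is injective on admissible twigs:
if `d(Ā)·d(B) = d(B̄)·d(A)` for admissible twigs `A` and `B`, then `A = B`. -/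
theorem stmt2 (A B : List ℤ) (hA : Admissible A) (hB : Admissible B)
    (h : twigDet A.tail * twigDet B = twigDet B.tail * twigDet A) :
    A = B := by
  obtain ⟨hA₁, hA₂⟩ := hA.one_le_twigDet_tail_lt
  obtain ⟨hB₁, hB₂⟩ := hB.one_le_twigDet_tail_lt
  obtain ⟨htail, hdet⟩ := Rat.div_int_inj (by omega) (by omega)
    (Int.isCoprime_iff_gcd_eq_one.mp (isCoprime_twigDet_twigDet_tail A).symm)
    (Int.isCoprime_iff_gcd_eq_one.mp (isCoprime_twigDet_twigDet_tail B).symm)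
    (by
      rw [div_eq_div_iff (Int.cast_ne_zero.mpr (by omega)) (Int.cast_ne_zero.mpr (by omega))]
      exact_mod_cast h)
  exact hA.eq_of_twigDet_eq hB hdet htail
end

section
/- Let c be an integer and let T_1,...,T_k be nonempty twigs (k ≥ 1). Then det S(c; T_1,...,T_k) = c·∏_{i=1}^k d(T_i) − ∑_{i=1}^k d(T̄_i)·∏_{j ≠ i} d(T_j). -/
open Matrix BigOperators

/-- The star matrix `S(c; T_1,...,T_k)`: symmetric matrix indexed by a central index
together with the disjoint union of the index sets of the twigs `T i`, with diagonal
entry `c` at the center, the principal submatrix on the indices of `T i` equal to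
`M(T i)`, entries `-1` between the center and the first index of each `T i`, and
all other entries `0`. -/
def starMatrix (c : ℤ) {k : ℕ} (T : Fin k → List ℤ) :
    Matrix (Unit ⊕ (Σ i : Fin k, Fin (T i).length))
           (Unit ⊕ (Σ i : Fin k, Fin (T i).length)) ℤ :=
  fun p q =>
    match p, q with
    | Sum.inl _, Sum.inl _ => c
    | Sum.inl _, Sum.inr ⟨_, j⟩ => if (j : ℕ) = 0 then -1 else 0
    | Sum.inr ⟨_, j⟩, Sum.inl _ => if (j : ℕ) = 0 then -1 else 0
    | Sum.inr ⟨i, j⟩, Sum.inr ⟨i', j'⟩ =>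
        if h : i = i' then twigMatrix (T i) j (Fin.cast (by rw [h]) j') else 0

lemma twigMatrix_succ (a : ℤ) (A : List ℤ) (i j : Fin A.length) :
    twigMatrix (a :: A) i.succ j.succ = twigMatrix A i j := by
  by_cases h : i = j
  · subst h
    simp [twigMatrix]
  · have h' : i.succ ≠ j.succ := by simpa [Fin.succ_inj] using h
    simp only [twigMatrix, if_neg h, if_neg h', Fin.val_succ]
    congr 1
    simp only [eq_iff_iff]
    omega

def splitLast {k : ℕ} (n : Fin (k + 1) → ℕ) :
    (Σ i : Fin (k + 1), Fin (n i)) ≃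
      ((Σ i : Fin k, Fin (n i.castSucc)) ⊕ Fin (n (Fin.last k))) where
  toFun p := Fin.lastCases
      (motive := fun i => Fin (n i) →
        ((Σ i : Fin k, Fin (n i.castSucc)) ⊕ Fin (n (Fin.last k))))
      (fun j => Sum.inr j) (fun i j => Sum.inl ⟨i, j⟩) p.1 p.2
  invFun q := q.elim (fun p => ⟨p.1.castSucc, p.2⟩) (fun j => ⟨Fin.last k, j⟩)
  left_inv := by
    rintro ⟨i, j⟩
    induction i using Fin.lastCases with
    | last => simp
    | cast i => simp
  right_inv := by rintro (⟨i, j⟩ | j) <;> simp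

lemma splitLast_symm_inl {k : ℕ} (n : Fin (k+1) → ℕ) (i : Fin k) (j : Fin (n i.castSucc)) :
    (splitLast n).symm (Sum.inl ⟨i, j⟩) = ⟨i.castSucc, j⟩ := rfl

lemma splitLast_symm_inr {k : ℕ} (n : Fin (k+1) → ℕ) (j : Fin (n (Fin.last k))) :
    (splitLast n).symm (Sum.inr j) = ⟨Fin.last k, j⟩ := rfl

def twigBlocks {k : ℕ} (T : Fin k → List ℤ) :
    Matrix (Σ i : Fin k, Fin (T i).length) (Σ i : Fin k, Fin (T i).length) ℤ :=
  fun p q => if h : p.1 = q.1 then twigMatrix (T p.1) p.2 (Fin.cast (by rw [h]) q.2) else 0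

lemma fin_cast_self {m : ℕ} (pf : m = m) (v : Fin m) : Fin.cast pf v = v := rfl

lemma det_twigBlocks : ∀ {k : ℕ} (T : Fin k → List ℤ),
    (twigBlocks T).det = ∏ i, twigDet (T i) := by
  intro k
  induction k with
  | zero =>
      intro T
      haveI : IsEmpty (Σ i : Fin 0, Fin (T i).length) := ⟨fun p => p.1.elim0⟩
      simp [Matrix.det_isEmpty]
  | succ k ih =>
      intro T
      have key : ((twigBlocks T).submatrix
            ((splitLast (fun i => (T i).length)).symm) ((splitLast (fun i => (T i).length)).symm))
          = Matrix.fromBlocks (twigBlocks (fun i => T i.castSucc)) 0 0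
              (twigMatrix (T (Fin.last k))) := by
        ext p q
        rcases p with ⟨i, j⟩ | j <;> rcases q with ⟨i', j'⟩ | j'
        · show twigBlocks T ⟨i.castSucc, j⟩ ⟨i'.castSucc, j'⟩ = _
          by_cases h : i = i'
          · subst h
            show dite _ _ _ = dite _ _ _
            rw [dif_pos rfl, dif_pos rfl]
          · show dite _ _ _ = dite _ _ _
            rw [dif_neg (by simpa [Fin.castSucc_inj] using h), dif_neg h]
          
        · show twigBlocks T ⟨i.castSucc, j⟩ ⟨Fin.last k, j'⟩ = 0
          show dite _ _ _ = _
          rw [dif_neg (Fin.castSucc_lt_last i).ne]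
        · show twigBlocks T ⟨Fin.last k, j⟩ ⟨i'.castSucc, j'⟩ = 0
          show dite _ _ _ = _
          rw [dif_neg (Fin.castSucc_lt_last i').ne']
        · show twigBlocks T ⟨Fin.last k, j⟩ ⟨Fin.last k, j'⟩ = twigMatrix (T (Fin.last k)) j j'
          show dite _ _ _ = _
          rw [dif_pos rfl]
          rfl
      have := Matrix.det_submatrix_equiv_self
        ((splitLast (fun i => (T i).length)).symm) (twigBlocks T)
      rw [← this, key, Matrix.det_fromBlocks_zero₂₁, ih, Fin.prod_univ_castSucc]
      rfl

def finConsEquiv (m : ℕ) : (Unit ⊕ Fin m) ≃ Fin (m + 1) where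
  toFun := Sum.elim (fun _ => ⟨0, Nat.succ_pos m⟩) Fin.succ
  invFun := Fin.cases (Sum.inl ()) Sum.inr
  left_inv := by rintro (⟨⟩ | j) <;> simp
  right_inv := by
    intro i
    induction i using Fin.cases with
    | zero => simp
    | succ i => simp

lemma det_updateCol_tail (L : List ℤ) (h0 : 0 < L.length) :
    ((twigMatrix L).updateCol ⟨0, h0⟩
        (fun j => if (j : ℕ) = 0 then (-1 : ℤ) else 0)).det = - twigDet L.tail := by
  match L, h0 with
  | a :: A, h0 =>
    have key : (((twigMatrix (a :: A)).updateCol ⟨0, h0⟩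
          (fun j => if (j : ℕ) = 0 then (-1 : ℤ) else 0)).submatrix
            (finConsEquiv A.length : (Unit ⊕ Fin A.length) ≃ Fin (a :: A).length)
            (finConsEquiv A.length : (Unit ⊕ Fin A.length) ≃ Fin (a :: A).length))
        = Matrix.fromBlocks (Matrix.of fun _ _ => (-1 : ℤ))
            (Matrix.of fun _ j => ((twigMatrix (a :: A)).updateCol ⟨0, h0⟩
              (fun j => if (j : ℕ) = 0 then (-1 : ℤ) else 0))
                ((finConsEquiv A.length : (Unit ⊕ Fin A.length) ≃ Fin (a :: A).length) (Sum.inl ()))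
                ((finConsEquiv A.length : (Unit ⊕ Fin A.length) ≃ Fin (a :: A).length) (Sum.inr j)))
            0 (twigMatrix A) := by
      ext p q
      rcases p with ⟨⟩ | j <;> rcases q with ⟨⟩ | j'
      · show ((twigMatrix (a :: A)).updateCol ⟨0, h0⟩
            (fun j => if (j : ℕ) = 0 then (-1 : ℤ) else 0)) ⟨0, h0⟩ ⟨0, h0⟩ = -1
        rw [Matrix.updateCol_apply, if_pos rfl]
        simp
      · rfl
      · show ((twigMatrix (a :: A)).updateCol ⟨0, h0⟩
            (fun j => if (j : ℕ) = 0 then (-1 : ℤ) else 0)) j.succ ⟨0, h0⟩ = 0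
        rw [Matrix.updateCol_apply, if_pos rfl]
        simp [Fin.val_succ]
      · show ((twigMatrix (a :: A)).updateCol ⟨0, h0⟩
            (fun j => if (j : ℕ) = 0 then (-1 : ℤ) else 0)) j.succ j'.succ = twigMatrix A j j'
        rw [Matrix.updateCol_apply, if_neg (by simp [Fin.ext_iff]), twigMatrix_succ]
    refine Eq.trans (Matrix.det_submatrix_equiv_self
      (finConsEquiv A.length : (Unit ⊕ Fin A.length) ≃ Fin (a :: A).length) _).symm
      (Eq.trans (congrArg Matrix.det key) ?_)
    rw [Matrix.det_fromBlocks_zero₂₁, Matrix.det_unique]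
    show (-1) * (twigMatrix A).det = - twigDet A
    rw [twigDet]; ring

def starSplit {k : ℕ} (n : Fin (k + 1) → ℕ) :
    ((Unit ⊕ (Σ i : Fin k, Fin (n i.castSucc))) ⊕ Fin (n (Fin.last k)))
      ≃ (Unit ⊕ (Σ i : Fin (k + 1), Fin (n i))) :=
  (Equiv.sumAssoc _ _ _).trans (Equiv.sumCongr (Equiv.refl Unit) (splitLast n).symm)

lemma starSplit_c {k : ℕ} (n : Fin (k + 1) → ℕ) (u : Unit) :
    starSplit n (Sum.inl (Sum.inl u)) = Sum.inl () := rfl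

lemma starSplit_f {k : ℕ} (n : Fin (k + 1) → ℕ) (i : Fin k) (j : Fin (n i.castSucc)) :
    starSplit n (Sum.inl (Sum.inr ⟨i, j⟩)) = Sum.inr ⟨i.castSucc, j⟩ := rfl

lemma starSplit_l {k : ℕ} (n : Fin (k + 1) → ℕ) (j : Fin (n (Fin.last k))) :
    starSplit n (Sum.inr j) = Sum.inr ⟨Fin.last k, j⟩ := rfl

lemma star_det_term1 (c : ℤ) {k : ℕ} (T : Fin (k + 1) → List ℤ)
    (hm : 0 < (T (Fin.last k)).length) :
    ((starMatrix c T).updateCol (Sum.inr ⟨Fin.last k, ⟨0, hm⟩⟩)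
        (fun p => if p = Sum.inl () then 0
          else starMatrix c T p (Sum.inr ⟨Fin.last k, ⟨0, hm⟩⟩))).det
      = (starMatrix c (fun i => T i.castSucc)).det * twigDet (T (Fin.last k)) := by
  classical
  have key : (((starMatrix c T).updateCol (Sum.inr ⟨Fin.last k, ⟨0, hm⟩⟩)
        (fun p => if p = Sum.inl () then 0
          else starMatrix c T p (Sum.inr ⟨Fin.last k, ⟨0, hm⟩⟩))).submatrix
          (starSplit (fun i => (T i).length)) (starSplit (fun i => (T i).length)))
      = Matrix.fromBlocks (starMatrix c (fun i => T i.castSucc)) 0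
          (Matrix.of fun j q => ((starMatrix c T).updateCol (Sum.inr ⟨Fin.last k, ⟨0, hm⟩⟩)
            (fun p => if p = Sum.inl () then 0
              else starMatrix c T p (Sum.inr ⟨Fin.last k, ⟨0, hm⟩⟩)))
            (starSplit (fun i => (T i).length) (Sum.inr j))
            (starSplit (fun i => (T i).length) (Sum.inl q)))
          (twigMatrix (T (Fin.last k))) := by
    ext p q
    rcases p with (⟨⟩ | ⟨i, j⟩) | j <;> rcases q with (⟨⟩ | ⟨i', j'⟩) | j'
    · -- center / center
      simp only [Matrix.submatrix_apply, starSplit_c, Matrix.fromBlocks_apply₁₁]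
      rw [Matrix.updateCol_apply, if_neg (by simp)]
      rfl
    · -- center / front
      simp only [Matrix.submatrix_apply, starSplit_c, starSplit_f, Matrix.fromBlocks_apply₁₁]
      rw [Matrix.updateCol_apply, if_neg (by simp [(Fin.castSucc_lt_last i').ne])]
      rfl
    · -- center / last : 0
      simp only [Matrix.submatrix_apply, starSplit_c, starSplit_l, Matrix.fromBlocks_apply₁₂,
        Matrix.zero_apply]
      rw [Matrix.updateCol_apply]
      by_cases hq : (Sum.inr ⟨Fin.last k, j'⟩ : Unit ⊕ (Σ i : Fin (k+1), Fin (T i).length))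
          = Sum.inr ⟨Fin.last k, ⟨0, hm⟩⟩
      · rw [if_pos hq]; simp
      · rw [if_neg hq]
        have hj : (j' : ℕ) ≠ 0 := fun h0 =>
          hq (by rw [show j' = (⟨0, hm⟩ : Fin (T (Fin.last k)).length) from Fin.ext h0])
        simp [starMatrix, hj]
    · -- front / center
      simp only [Matrix.submatrix_apply, starSplit_f, starSplit_c, Matrix.fromBlocks_apply₁₁]
      rw [Matrix.updateCol_apply, if_neg (by simp)]
      rfl
    · -- front / front
      simp only [Matrix.submatrix_apply, starSplit_f, Matrix.fromBlocks_apply₁₁]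
      rw [Matrix.updateCol_apply, if_neg (by simp [(Fin.castSucc_lt_last i').ne])]
      simp only [starMatrix]
      by_cases h : i = i'
      · subst h
        rw [dif_pos rfl, dif_pos rfl]
      · rw [dif_neg (by simpa [Fin.castSucc_inj] using h), dif_neg h]
    · -- front / last : 0
      simp only [Matrix.submatrix_apply, starSplit_f, starSplit_l, Matrix.fromBlocks_apply₁₂,
        Matrix.zero_apply]
      rw [Matrix.updateCol_apply]
      by_cases hq : (Sum.inr ⟨Fin.last k, j'⟩ : Unit ⊕ (Σ i : Fin (k+1), Fin (T i).length))
          = Sum.inr ⟨Fin.last k, ⟨0, hm⟩⟩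
      · rw [if_pos hq]; simp [starMatrix, (Fin.castSucc_lt_last i).ne]
      · rw [if_neg hq]; simp [starMatrix, (Fin.castSucc_lt_last i).ne]
    · rfl
    · rfl
    · -- last / last
      simp only [Matrix.submatrix_apply, starSplit_l, Matrix.fromBlocks_apply₂₂]
      rw [Matrix.updateCol_apply]
      by_cases hq : (Sum.inr ⟨Fin.last k, j'⟩ : Unit ⊕ (Σ i : Fin (k+1), Fin (T i).length))
          = Sum.inr ⟨Fin.last k, ⟨0, hm⟩⟩
      · have hj : j' = ⟨0, hm⟩ := by
          simpa using hq
        subst hj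
        rw [if_pos hq]
        simp only [starMatrix]
        rw [if_neg (by simp)]
        simp
      · rw [if_neg hq]
        simp only [starMatrix]
        simp
  refine Eq.trans (Matrix.det_submatrix_equiv_self
      (starSplit (fun i => (T i).length)) _).symm
    (Eq.trans (congrArg Matrix.det key) ?_)
  rw [Matrix.det_fromBlocks_zero₁₂]
  rfl

lemma star_det_term2 (c : ℤ) {k : ℕ} (T : Fin (k + 1) → List ℤ)
    (hm : 0 < (T (Fin.last k)).length) :
    ((starMatrix c T).updateCol (Sum.inr ⟨Fin.last k, ⟨0, hm⟩⟩)
        (fun p => if p = Sum.inl () then (-1 : ℤ) else 0)).det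
      = - (twigDet (T (Fin.last k)).tail * ∏ i : Fin k, twigDet (T i.castSucc)) := by
  classical
  set S₂ := (starMatrix c T).updateCol (Sum.inr ⟨Fin.last k, ⟨0, hm⟩⟩)
      (fun p => if p = Sum.inl () then (-1 : ℤ) else 0) with hS₂
  set σ : Equiv.Perm (Unit ⊕ (Σ i : Fin (k+1), Fin (T i).length)) :=
      Equiv.swap (Sum.inl ()) (Sum.inr ⟨Fin.last k, ⟨0, hm⟩⟩) with hσ
  have hperm := Matrix.det_permute' σ S₂
  have hsign : Equiv.Perm.sign σ = -1 := Equiv.Perm.sign_swap (by simp)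
  rw [hsign] at hperm
  -- hperm : (S₂.submatrix id ⇑σ).det = ↑(-1) * S₂.det
  have hS2det : S₂.det = - (S₂.submatrix id ⇑σ).det := by
    rw [hperm]; simp
  -- block structure of the swapped matrix
  have key1 : S₂.submatrix id ⇑σ
      = Matrix.fromBlocks (Matrix.of fun (_ : Unit) (_ : Unit) => (-1 : ℤ))
          (Matrix.of fun (_ : Unit) q => (S₂.submatrix id ⇑σ) (Sum.inl ()) (Sum.inr q))
          0
          (Matrix.of fun p q => (S₂.submatrix id ⇑σ) (Sum.inr p) (Sum.inr q)) := by
    ext p q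
    rcases p with ⟨⟩ | p <;> rcases q with ⟨⟩ | q
    · -- (inl, inl)
      simp only [Matrix.submatrix_apply, id_eq, Matrix.fromBlocks_apply₁₁, Matrix.of_apply]
      rw [hσ, Equiv.swap_apply_left, hS₂, Matrix.updateCol_apply, if_pos rfl]
      simp
    · rfl
    · -- (inr, inl)
      simp only [Matrix.submatrix_apply, id_eq, Matrix.fromBlocks_apply₂₁, Matrix.zero_apply]
      rw [hσ, Equiv.swap_apply_left, hS₂, Matrix.updateCol_apply, if_pos rfl]
      simp
    · rfl
  have hdetD : (Matrix.of fun p q => (S₂.submatrix id ⇑σ) (Sum.inr p) (Sum.inr q)).det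
      = (∏ i : Fin k, twigDet (T i.castSucc)) * (- twigDet (T (Fin.last k)).tail) := by
    have key2 : ((Matrix.of fun p q => (S₂.submatrix id ⇑σ) (Sum.inr p) (Sum.inr q)).submatrix
          (splitLast (fun i => (T i).length)).symm (splitLast (fun i => (T i).length)).symm)
        = Matrix.fromBlocks (twigBlocks (fun i => T i.castSucc))
            (Matrix.of fun p j => ((Matrix.of fun p q =>
                (S₂.submatrix id ⇑σ) (Sum.inr p) (Sum.inr q)).submatrix
                (splitLast (fun i => (T i).length)).symm
                (splitLast (fun i => (T i).length)).symm) (Sum.inl p) (Sum.inr j))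
            0
            ((twigMatrix (T (Fin.last k))).updateCol ⟨0, hm⟩
              (fun j => if (j : ℕ) = 0 then (-1 : ℤ) else 0)) := by
      ext p q
      rcases p with ⟨i, j⟩ | j <;> rcases q with ⟨i', j'⟩ | j'
      · -- front/front
        simp only [Matrix.submatrix_apply, id_eq, Matrix.of_apply, Matrix.fromBlocks_apply₁₁,
          splitLast_symm_inl]
        rw [hσ, Equiv.swap_apply_of_ne_of_ne (by simp)
            (by simp [(Fin.castSucc_lt_last i').ne])]
        rw [hS₂, Matrix.updateCol_apply,
          if_neg (by simp [(Fin.castSucc_lt_last i').ne])]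
        simp only [starMatrix, twigBlocks]
        by_cases h : i = i'
        · subst h
          rw [dif_pos rfl, dif_pos rfl]
        · rw [dif_neg (by simpa [Fin.castSucc_inj] using h), dif_neg h]
      · rfl
      · -- last row / front col : 0
        simp only [Matrix.submatrix_apply, id_eq, Matrix.of_apply, Matrix.fromBlocks_apply₂₁,
          Matrix.zero_apply, splitLast_symm_inl, splitLast_symm_inr]
        rw [hσ, Equiv.swap_apply_of_ne_of_ne (by simp)
            (by simp [(Fin.castSucc_lt_last i').ne])]
        rw [hS₂, Matrix.updateCol_apply,
          if_neg (by simp [(Fin.castSucc_lt_last i').ne])]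
        simp only [starMatrix]
        rw [dif_neg (Fin.castSucc_lt_last i').ne']
      · -- last/last
        simp only [Matrix.submatrix_apply, id_eq, Matrix.of_apply, Matrix.fromBlocks_apply₂₂,
          splitLast_symm_inr]
        by_cases hq : j' = (⟨0, hm⟩ : Fin (T (Fin.last k)).length)
        · subst hq
          rw [hσ, Equiv.swap_apply_right, hS₂, Matrix.updateCol_apply,
            if_neg (by simp)]
          rw [Matrix.updateCol_apply, if_pos rfl]
          rfl
        · rw [hσ, Equiv.swap_apply_of_ne_of_ne (by simp) (by simp [hq])]
          rw [hS₂, Matrix.updateCol_apply, if_neg (by simp [hq])]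
          rw [Matrix.updateCol_apply, if_neg hq]
          simp only [starMatrix]
          simp
    refine Eq.trans (Matrix.det_submatrix_equiv_self
        (splitLast (fun i => (T i).length)).symm _).symm
      (Eq.trans (congrArg Matrix.det key2) ?_)
    rw [Matrix.det_fromBlocks_zero₂₁, det_twigBlocks, det_updateCol_tail]
  rw [hS2det, key1, Matrix.det_fromBlocks_zero₂₁, hdetD, Matrix.det_unique]
  simp only [Matrix.of_apply]
  ring

lemma prod_erase_castSucc {k : ℕ} (f : Fin (k + 1) → ℤ) (i : Fin k) :
    ∏ j ∈ (Finset.univ : Finset (Fin (k + 1))).erase i.castSucc, f j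
      = f (Fin.last k) * ∏ j ∈ (Finset.univ : Finset (Fin k)).erase i, f j.castSucc := by
  rw [Fin.univ_castSuccEmb, Finset.cons_eq_insert,
    Finset.erase_insert_of_ne (Fin.castSucc_lt_last i).ne',
    Finset.prod_insert (by simp [Fin.castSuccEmb]; exact fun _ x => (Fin.castSucc_lt_last x).ne),
    show (Fin.castSucc i) = Fin.castSuccEmb i from rfl,
    ← Finset.map_erase, Finset.prod_map]
  rfl

lemma prod_erase_last {k : ℕ} (f : Fin (k + 1) → ℤ) :
    ∏ j ∈ (Finset.univ : Finset (Fin (k + 1))).erase (Fin.last k), f j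
      = ∏ j : Fin k, f j.castSucc := by
  rw [Fin.univ_castSuccEmb, Finset.cons_eq_insert, Finset.erase_insert (by simp),
    Finset.prod_map]
  rfl

lemma star_det (k : ℕ) (c : ℤ) (T : Fin k → List ℤ) (hT : ∀ i, T i ≠ []) :
    (starMatrix c T).det =
      c * ∏ i, twigDet (T i) -
        ∑ i, twigDet (T i).tail * ∏ j ∈ Finset.univ.erase i, twigDet (T j) := by
  induction k with
  | zero =>
      haveI : IsEmpty (Σ i : Fin 0, Fin (T i).length) := ⟨fun p => p.1.elim0⟩
      refine Eq.trans (Matrix.det_submatrix_equiv_self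
          ((Equiv.sumEmpty Unit (Σ i : Fin 0, Fin (T i).length)).symm) _).symm ?_
      rw [Matrix.det_unique]
      show c = _
      simp
  | succ k ih =>
      have hm : 0 < (T (Fin.last k)).length := List.length_pos_iff.mpr (hT _)
      have hcol : (fun p => starMatrix c T p (Sum.inr ⟨Fin.last k, ⟨0, hm⟩⟩))
          = (fun p => if p = Sum.inl () then 0
                else starMatrix c T p (Sum.inr ⟨Fin.last k, ⟨0, hm⟩⟩))
            + (fun p => if p = Sum.inl () then (-1 : ℤ) else 0) := by
        funext p
        rcases p with ⟨⟩ | ⟨i, j⟩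
        · simp [starMatrix]
        · simp
      have hsplit : (starMatrix c T).det
          = ((starMatrix c T).updateCol (Sum.inr ⟨Fin.last k, ⟨0, hm⟩⟩)
              (fun p => if p = Sum.inl () then 0
                else starMatrix c T p (Sum.inr ⟨Fin.last k, ⟨0, hm⟩⟩))).det
            + ((starMatrix c T).updateCol (Sum.inr ⟨Fin.last k, ⟨0, hm⟩⟩)
              (fun p => if p = Sum.inl () then (-1 : ℤ) else 0)).det := by
        rw [← Matrix.det_updateCol_add]
        conv_lhs => rw [← Matrix.updateCol_eq_self (starMatrix c T)
          (Sum.inr ⟨Fin.last k, ⟨0, hm⟩⟩)]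
        rw [hcol]
      rw [hsplit, star_det_term1 c T hm, star_det_term2 c T hm,
        ih (fun i => T i.castSucc) (fun i => hT _)]
      rw [Fin.prod_univ_castSucc (f := fun i => twigDet (T i)),
        Fin.sum_univ_castSucc
          (f := fun i => twigDet (T i).tail * ∏ j ∈ Finset.univ.erase i, twigDet (T j)),
        prod_erase_last (fun j => twigDet (T j))]
      have hsum : ∀ i : Fin k,
          twigDet (T i.castSucc).tail * ∏ j ∈ Finset.univ.erase i.castSucc, twigDet (T j)
            = twigDet (T (Fin.last k)) *
              (twigDet (T i.castSucc).tail * ∏ j ∈ Finset.univ.erase i, twigDet (T j.castSucc)) := by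
        intro i
        rw [prod_erase_castSucc (fun j => twigDet (T j)) i]
        ring
      rw [Finset.sum_congr rfl (fun i _ => hsum i), ← Finset.mul_sum]
      ring

/-- for an integer `c` and nonempty twigs `T_1,...,T_k` (`k ≥ 1`),
`det S(c; T_1,...,T_k) = c·∏ d(T_i) − ∑_i d(T̄_i)·∏_{j ≠ i} d(T_j)`. -/
theorem stmt6 (c : ℤ) (k : ℕ) (hk : 1 ≤ k) (T : Fin k → List ℤ)
    (hT : ∀ i, T i ≠ []) :
    (starMatrix c T).det =
      c * ∏ i, twigDet (T i) -
        ∑ i, twigDet (T i).tail * ∏ j ∈ Finset.univ.erase i, twigDet (T j) :=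
  star_det k c T hT
end

section
/- Let c be an integer and let T_1,...,T_k be admissible twigs (k ≥ 0). Then the star matrix S(c; T_1,...,T_k) is positive definite if and only if ∑_{i=1}^k d(T̄_i)/d(T_i) < c. -/
open Matrix BigOperators

/-! Both the star matrix and `M(a :: A)` are bordered matrices `[[c, vᵀ], [v, D]]` with `D`
positive definite, and by the Schur complement such a matrix is positive definite iff
`vᵀ D⁻¹ v < c`. For a twig `v = -e₀`, so `vᵀ D⁻¹ v = (D⁻¹)₀₀ = d(Ā)/d(A)` by the adjugate formula;
for the star `D` is block diagonal and `vᵀ D⁻¹ v` is the sum of these ratios over the twigs.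
Admissible twigs are positive definite by induction on the length: the continued fraction
`d(A)/d(a :: A) = 1/(a - d(Ā)/d(A))`, read off from `det` of the bordered matrix, keeps the
ratio below `1` when every entry is at least `2`. -/

namespace Matrix

theorem posDef_iff_of_unique {m R : Type*} [Unique m] [Ring R] [PartialOrder R] [StarRing R]
    [StarOrderedRing R] [NoZeroDivisors R] [Nontrivial R] (M : Matrix m m R) :
    M.PosDef ↔ 0 < M default default := by
  have hM : M = diagonal fun _ => M default default := by
    ext i j
    simp [Subsingleton.elim i default, Subsingleton.elim j default]
  rw [hM, posDef_diagonal_iff]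
  simp

theorem replicateRow_mul_mul_replicateCol_apply {ι n α : Type*} [Fintype n]
    [NonUnitalSemiring α] (v : n → α) (N : Matrix n n α) (i j : ι) :
    (replicateRow ι v * N * replicateCol ι v) i j = v ⬝ᵥ N *ᵥ v := by
  rw [Matrix.mul_assoc, ← replicateCol_mulVec, replicateRow_mul_replicateCol_apply]

section BlockDiagonal

variable {o R : Type*} [Fintype o] [DecidableEq o] {p : o → Type*} [∀ i, Fintype (p i)]

theorem dotProduct_blockDiagonal'_mulVec [CommSemiring R] (M : ∀ i, Matrix (p i) (p i) R)
    (x y : (Σ i, p i) → R) :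
    x ⬝ᵥ blockDiagonal' M *ᵥ y = ∑ i, (fun j => x ⟨i, j⟩) ⬝ᵥ M i *ᵥ fun j => y ⟨i, j⟩ := by
  simp [dotProduct, mulVec, blockDiagonal'_apply, Fintype.sum_sigma]

theorem PosDef.blockDiagonal' [CommRing R] [PartialOrder R] [IsOrderedRing R] [StarRing R]
    {M : ∀ i, Matrix (p i) (p i) R} (hM : ∀ i, (M i).PosDef) : (blockDiagonal' M).PosDef := by
  refine .of_dotProduct_mulVec_pos (isHermitian_blockDiagonal'_iff.mpr fun i => (hM i).1)
    fun x hx => ?_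
  obtain ⟨⟨i, j⟩, hij⟩ := Function.ne_iff.mp hx
  rw [dotProduct_blockDiagonal'_mulVec]
  refine Finset.sum_pos' (fun i _ => (hM i).posSemidef.dotProduct_mulVec_nonneg _)
    ⟨i, Finset.mem_univ _, (hM i).dotProduct_mulVec_pos fun h => hij (congrFun h j)⟩

theorem inv_blockDiagonal' [∀ i, DecidableEq (p i)] [CommRing R]
    {M : ∀ i, Matrix (p i) (p i) R} (hM : ∀ i, IsUnit (M i).det) :
    (blockDiagonal' M)⁻¹ = blockDiagonal' fun i => (M i)⁻¹ :=
  inv_eq_right_inv <| by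
    rw [← blockDiagonal'_mul]
    simp only [mul_nonsing_inv _ (hM _)]
    exact blockDiagonal'_one

end BlockDiagonal

section Bordered

variable {m n K : Type*} [Fintype m] [Fintype n] [DecidableEq n] [Field K]

theorem posDef_fromBlocks₂₂_iff [PartialOrder K] [IsOrderedRing K] [StarRing K]
    (A : Matrix m m K) (B : Matrix m n K) {D : Matrix n n K} (hD : D.PosDef) :
    (fromBlocks A B Bᴴ D).PosDef ↔ (A - B * D⁻¹ * Bᴴ).PosDef := by
  have := hD.isUnit.invertible
  rw [posDef_iff_dotProduct_mulVec, posDef_iff_dotProduct_mulVec,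
    IsHermitian.fromBlocks₂₂ _ _ hD.1]
  refine and_congr_right fun _ => ⟨fun h x hx => ?_, fun h v hv => ?_⟩
  · have := h (x := Sum.elim x (-((D⁻¹ * Bᴴ) *ᵥ x))) fun h0 =>
      hx (by simpa using congrArg (· ∘ Sum.inl) h0)
    rwa [dotProduct_mulVec, schur_complement_eq₂₂ _ _ _ _ hD.1, add_neg_cancel, star_zero,
      zero_vecMul, zero_dotProduct, zero_add, ← dotProduct_mulVec] at this
  · rw [dotProduct_mulVec, ← Sum.elim_comp_inl_inr v, schur_complement_eq₂₂ _ _ _ _ hD.1,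
      ← dotProduct_mulVec, ← dotProduct_mulVec]
    by_cases hx : v ∘ Sum.inl = 0
    · have hy : v ∘ Sum.inr ≠ 0 := fun hy =>
        hv (by simpa [hx, hy] using (Sum.elim_comp_inl_inr v).symm)
      simpa [hx] using hD.dotProduct_mulVec_pos hy
    · exact add_pos_of_nonneg_of_pos (hD.posSemidef.dotProduct_mulVec_nonneg _) (h hx)

def bordered (c : K) (v : n → K) (D : Matrix n n K) : Matrix (Unit ⊕ n) (Unit ⊕ n) K :=
  fromBlocks (of fun _ _ => c) (replicateRow Unit v) (replicateCol Unit v) D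

theorem det_bordered (c : K) (v : n → K) {D : Matrix n n K} (hD : IsUnit D.det) :
    (bordered c v D).det = D.det * (c - v ⬝ᵥ D⁻¹ *ᵥ v) := by
  have := D.invertibleOfIsUnitDet hD
  rw [bordered, det_fromBlocks₂₂, invOf_eq_nonsing_inv, det_unique (_ : Matrix Unit Unit K),
    sub_apply, replicateRow_mul_mul_replicateCol_apply, of_apply]

theorem posDef_bordered_iff [PartialOrder K] [IsOrderedRing K] [StarRing K]
    [TrivialStar K] [StarOrderedRing K] (c : K) (v : n → K) {D : Matrix n n K} (hD : D.PosDef) :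
    (bordered c v D).PosDef ↔ v ⬝ᵥ D⁻¹ *ᵥ v < c := by
  have hcol : replicateCol Unit v = (replicateRow Unit v)ᴴ := by
    rw [conjTranspose_replicateRow, star_trivial]
  rw [bordered, hcol, posDef_fromBlocks₂₂_iff _ _ hD, posDef_iff_of_unique, sub_apply, ← hcol,
    replicateRow_mul_mul_replicateCol_apply, of_apply, sub_pos]

end Bordered

theorem inv_zero_zero_eq_det_div {K : Type*} [Field K] {n : ℕ}
    (M : Matrix (Fin (n + 1)) (Fin (n + 1)) K) :
    M⁻¹ 0 0 = (M.submatrix Fin.succ Fin.succ).det / M.det := by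
  rw [inv_def, smul_apply, adjugate_fin_succ_eq_det_submatrix, Fin.succAbove_zero,
    Ring.inverse_eq_inv', smul_eq_mul]
  simp [div_eq_inv_mul]

end Matrix

def twigMatrixRat (A : List ℤ) : Matrix (Fin A.length) (Fin A.length) ℚ :=
  (twigMatrix A).map (↑)

/-- The entries joining a curve that meets the twig in its first component. -/
def twigLink (A : List ℤ) : Fin A.length → ℚ := fun j => if (j : ℕ) = 0 then -1 else 0

noncomputable def twigRatio (A : List ℤ) : ℚ :=
  twigLink A ⬝ᵥ (twigMatrixRat A)⁻¹ *ᵥ twigLink A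

def unitSumFinEquiv (n : ℕ) : Unit ⊕ Fin n ≃ Fin (n + 1) where
  toFun := Sum.elim (fun _ => 0) Fin.succ
  invFun := Fin.cases (Sum.inl ()) Sum.inr
  left_inv := by rintro (_ | i) <;> simp
  right_inv i := by cases i using Fin.cases <;> simp

theorem twigMatrixRat_isHermitian (A : List ℤ) : (twigMatrixRat A).IsHermitian := by
  ext i j
  simp only [twigMatrixRat, conjTranspose_apply, map_apply, star_trivial, twigMatrix]
  grind

theorem det_twigMatrixRat (A : List ℤ) : (twigMatrixRat A).det = twigDet A :=
  ((Int.castRingHom ℚ).map_det _).symm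

theorem twigMatrixRat_cons_submatrix (a : ℤ) (A : List ℤ) :
    (twigMatrixRat (a :: A)).submatrix (unitSumFinEquiv _) (unitSumFinEquiv _)
      = bordered (a : ℚ) (twigLink A) (twigMatrixRat A) := by
  ext (_ | i) (_ | j) <;>
    simp [unitSumFinEquiv, bordered, twigMatrixRat, twigMatrix, twigLink, Fin.ext_iff]

theorem twigMatrixRat_cons_submatrix_succ (a : ℤ) (A : List ℤ) :
    (twigMatrixRat (a :: A)).submatrix Fin.succ Fin.succ = twigMatrixRat A := by
  ext i j
  simp [twigMatrixRat, twigMatrix, Fin.ext_iff]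

theorem twigRatio_cons (a : ℤ) (A : List ℤ) :
    twigRatio (a :: A) = twigDet A / twigDet (a :: A) := by
  have hlink : twigLink (a :: A) = -Pi.single 0 1 := by
    ext j
    cases j using Fin.cases <;> simp [twigLink]
  rw [twigRatio, hlink, mulVec_neg, neg_dotProduct_neg, mulVec_single_one, single_dotProduct,
    one_mul, col_apply, inv_zero_zero_eq_det_div, twigMatrixRat_cons_submatrix_succ, det_twigMatrixRat,
    det_twigMatrixRat]

theorem twigRatio_eq_div {A : List ℤ} (hA : A ≠ []) :
    twigRatio A = twigDet A.tail / twigDet A := by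
  obtain ⟨a, A, rfl⟩ := List.exists_cons_of_ne_nil hA
  exact twigRatio_cons a A

theorem twigDet_cons (a : ℤ) {A : List ℤ} (hA : IsUnit (twigMatrixRat A).det) :
    (twigDet (a :: A) : ℚ) = twigDet A * (a - twigRatio A) := by
  rw [← det_twigMatrixRat, ← det_submatrix_equiv_self (unitSumFinEquiv _),
    twigMatrixRat_cons_submatrix, det_bordered _ _ hA, det_twigMatrixRat, twigRatio]

theorem twigRatio_cons_eq_inv (a : ℤ) {A : List ℤ} (hA : IsUnit (twigMatrixRat A).det) :
    twigRatio (a :: A) = (a - twigRatio A)⁻¹ := by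
  rw [twigRatio_cons, twigDet_cons a hA, ← det_twigMatrixRat, div_mul_cancel_left₀ hA.ne_zero]

theorem posDef_twigMatrixRat_and_twigRatio_lt_one {A : List ℤ} (hA : ∀ a ∈ A, 2 ≤ a) :
    (twigMatrixRat A).PosDef ∧ twigRatio A < 1 := by
  induction A with
  | nil =>
    exact ⟨.of_dotProduct_mulVec_pos (twigMatrixRat_isHermitian [])
      fun x hx => (hx (funext (·.elim0))).elim, by simp [twigRatio]⟩
  | cons a A ih =>
    obtain ⟨hPD, hlt⟩ := ih fun b hb => hA b (List.mem_cons_of_mem _ hb)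
    have ha : (2 : ℚ) ≤ a := by exact_mod_cast hA a List.mem_cons_self
    have hcomp : 1 < (a : ℚ) - twigRatio A := by linarith
    constructor
    · have hB := (posDef_bordered_iff (a : ℚ) (twigLink A) hPD).mpr
        (by rw [← twigRatio]; linarith)
      rw [← twigMatrixRat_cons_submatrix] at hB
      simpa using hB.submatrix (unitSumFinEquiv _).symm.injective
    · rw [twigRatio_cons_eq_inv a ((isUnit_iff_isUnit_det _).mp hPD.isUnit)]
      exact inv_lt_one_of_one_lt₀ hcomp

theorem starMatrix_map_eq_bordered (c : ℤ) {k : ℕ} (T : Fin k → List ℤ) :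
    (starMatrix c T).map ((↑) : ℤ → ℚ)
      = bordered (c : ℚ) (fun p => twigLink (T p.1) p.2)
          (blockDiagonal' fun i => twigMatrixRat (T i)) := by
  ext (_ | ⟨i, j⟩) (_ | ⟨i', j'⟩)
  · rfl
  · simp [starMatrix, bordered, twigLink]
  · simp [starMatrix, bordered, twigLink]
  · by_cases h : i = i'
    · subst h
      simp [starMatrix, bordered, blockDiagonal'_apply, twigMatrixRat]
    · simp [starMatrix, bordered, blockDiagonal'_apply, h]

/-- for an integer `c` and admissible twigs `T_1,...,T_k` (`k ≥ 0`),
the star matrix `S(c; T_1,...,T_k)` is positive definite if and only if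
`∑_i d(T̄_i)/d(T_i) < c`. -/
theorem stmt7 (c : ℤ) (k : ℕ) (T : Fin k → List ℤ)
    (hT : ∀ i, Admissible (T i)) :
    ((starMatrix c T).map ((↑) : ℤ → ℚ)).PosDef ↔
      ∑ i, (twigDet (T i).tail : ℚ) / (twigDet (T i) : ℚ) < (c : ℚ) := by
  have hPD i := (posDef_twigMatrixRat_and_twigRatio_lt_one (hT i).2).1
  rw [starMatrix_map_eq_bordered, posDef_bordered_iff _ _ (PosDef.blockDiagonal' hPD),
    inv_blockDiagonal' fun i => (isUnit_iff_isUnit_det _).mp (hPD i).isUnit,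
    dotProduct_blockDiagonal'_mulVec]
  have hsum : ∑ i, twigRatio (T i) = ∑ i, (twigDet (T i).tail : ℚ) / twigDet (T i) :=
    Finset.sum_congr rfl fun i _ => twigRatio_eq_div (hT i).1
  rw [← hsum]
  rfl
end
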